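/- arXiv:1910.04340 — 2 statements merged into one kernel-verified Lean document; each statement's English description precedes it below -/
import Mathlib

section
/- Let $x_0\in\mathbb{R}^N$, $\lambda>0$, $0<r<R_0$, and let $u\in H^1_0(B_{R_0}(x_0))\cap H^2(B_{R_0}(x_0))$ satisfy (with $N_{\lambda,R_0}$ the Gaussian-weighted frequency at the ball $B_{R_0}(x_0)$) the bound $\frac{16\lambda}{r^2}\big(\frac{N}{4}+\lambda N_{\lambda,R_0}\big)\le \mu$ for some $\mu\in(0,1)$, where $N_{\lambda,R_0}=\frac{\int_{B_{R_0}}|\nabla u|^2 e^{-|x-x_0|^2/(4\lambda)}dx}{\int_{B_{R_0}}u^2 e^{-|x-x_0|^2/(4\lambda)}dx}$. Then $(1-\mu)\int_{B_{R_0}(x_0)}u^2\,e^{-|x-x_0|^2/(4\lambda)}\,dx \le \int_{B_r(x_0)}u^2\,e^{-|x-x_0|^2/(4\lambda)}\,dx$. -/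
open MeasureTheory Real Set

noncomputable def lap {N : ℕ} (f : EuclideanSpace ℝ (Fin N) → ℝ)
    (x : EuclideanSpace ℝ (Fin N)) : ℝ :=
  ∑ i : Fin N, fderiv ℝ (fun y => fderiv ℝ f y (EuclideanSpace.single i 1)) x
    (EuclideanSpace.single i 1)

/-- `φ` solves `∂ₜφ - Δφ + aφ = 0` on `ℝ^N × (0,T)` (pointwise formulation). -/
def IsHeatSol {N : ℕ} (T : ℝ) (a φ : ℝ → EuclideanSpace ℝ (Fin N) → ℝ) : Prop :=
  ∀ (x : EuclideanSpace ℝ (Fin N)), ∀ t ∈ Set.Ioo (0:ℝ) T,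
    HasDerivAt (fun s => φ s x) (lap (φ t) x - a t x * φ t x) t

/-- The smallest cube centered at `x₀` containing the closed ball of radius `r`. -/
def cube {N : ℕ} (x₀ : EuclideanSpace ℝ (Fin N)) (r : ℝ) :
    Set (EuclideanSpace ℝ (Fin N)) := {y | ∀ i, |y i - x₀ i| ≤ r}

/-- Backward Gaussian kernel `G_λ`. -/
noncomputable def Gker (N : ℕ) (T lam : ℝ) (x₀ : EuclideanSpace ℝ (Fin N))
    (t : ℝ) (x : EuclideanSpace ℝ (Fin N)) : ℝ :=
  (T - t + lam) ^ (-(N:ℝ)/2) * Real.exp (-‖x - x₀‖^2 / (4*(T - t + lam)))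

/-!
With `G x = exp (-‖x - x₀‖² / (4λ))`, the divergence of `(x - x₀) u² G` is
`N u² G + 2 u ∇u·(x - x₀) G - ‖x - x₀‖² u² G / (2λ)`; it integrates to zero over the ball because
`u` vanishes on the sphere. Absorbing the cross term by Young's inequality gives the weighted
Hardy inequality `∫ ‖x - x₀‖² u² G ≤ 4λN ∫ u² G + 16λ² ∫ ‖∇u‖² G`. Outside `B_r` one has
`u² G ≤ ‖x - x₀‖² u² G / r²`, so the mass of `u² G` outside `B_r` is at most
`(4λN ∫ u² G + 16λ² ∫ ‖∇u‖² G) / r²`, which the frequency bound makes at most `μ ∫ u² G`.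
-/

theorem integral_indicator_sq_le_eq_zero {g g' : ℝ → ℝ} {c : ℝ}
    (hg : ∀ t, HasDerivAt g (g' t) t) (hg' : Continuous g') (hc : ∀ t, t ^ 2 = c → g t = 0) :
    ∫ t, {t : ℝ | t ^ 2 ≤ c}.indicator g' t = 0 := by
  rcases lt_or_ge c 0 with hneg | hnonneg
  · have hempty : {t : ℝ | t ^ 2 ≤ c} = ∅ :=
      eq_empty_of_forall_notMem fun t ht => (sq_nonneg t).not_gt (lt_of_le_of_lt ht hneg)
    simp [hempty]
  · have hset : {t : ℝ | t ^ 2 ≤ c} = Icc (-√c) √c := by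
      ext t; simp [Real.sq_le hnonneg]
    rw [hset, integral_indicator measurableSet_Icc, integral_Icc_eq_integral_Ioc,
      ← intervalIntegral.integral_of_le (by linarith [sqrt_nonneg c]),
      intervalIntegral.integral_eq_sub_of_hasDerivAt (fun t _ => hg t) (hg'.intervalIntegrable _ _),
      hc _ (sq_sqrt hnonneg), hc _ (by rw [neg_sq, sq_sqrt hnonneg]), sub_zero]

theorem norm_toLp_insertNth_sq {n : ℕ} (i : Fin (n + 1)) (t : ℝ) (w : Fin n → ℝ) :
    ‖WithLp.toLp 2 (Fin.insertNth (α := fun _ => ℝ) i t w)‖ ^ 2 = t ^ 2 + ∑ j, w j ^ 2 := by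
  rw [EuclideanSpace.norm_sq_eq, Fin.sum_univ_succAbove _ i]
  simp

theorem toLp_insertNth_eq_add_smul {n : ℕ} (i : Fin (n + 1)) (t : ℝ) (w : Fin n → ℝ) :
    WithLp.toLp 2 (Fin.insertNth (α := fun _ => ℝ) i t w)
      = WithLp.toLp 2 (Fin.insertNth (α := fun _ => ℝ) i 0 w) + t • EuclideanSpace.single i 1 := by
  ext j
  refine Fin.succAboveCases i ?_ (fun k => ?_) j <;> simp [Fin.succAbove_ne]

section Ball

variable {N : ℕ} {x₀ : EuclideanSpace ℝ (Fin N)}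

/-- Fubini along the lines parallel to `eᵢ`: each one meets the ball in a segment
`t² ≤ R² - ‖w‖²` at whose ends `F` vanishes. -/
theorem integral_fderiv_single_closedBall_eq_zero {R : ℝ} (hR : 0 ≤ R)
    {F : EuclideanSpace ℝ (Fin N) → ℝ} (hF : ContDiff ℝ 1 F)
    (hF0 : ∀ x, ‖x - x₀‖ = R → F x = 0) (i : Fin N) :
    ∫ x in Metric.closedBall x₀ R, fderiv ℝ F x (EuclideanSpace.single i 1) = 0 := by
  obtain ⟨n, rfl⟩ : ∃ n, N = n + 1 := ⟨N - 1, by have := i.pos; omega⟩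
  set v : EuclideanSpace ℝ (Fin (n + 1)) := EuclideanSpace.single i 1
  set φ := fun x => fderiv ℝ F x v
  have hφ : Continuous φ := (hF.continuous_fderiv one_ne_zero).clm_apply continuous_const
  let e := (MeasurableEquiv.piFinSuccAbove (fun _ : Fin (n + 1) => ℝ) i).symm.trans
    (MeasurableEquiv.toLp 2 (Fin (n + 1) → ℝ))
  have he : MeasurePreserving e volume volume :=
    (EuclideanSpace.volume_preserving_symm_measurableEquiv_toLp (Fin (n + 1))).symm.comp
      (measurePreserving_piFinSuccAbove (fun _ : Fin (n + 1) => (volume : Measure ℝ)) i).symm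
  set f := (Metric.closedBall x₀ R).indicator φ
  have hf : Integrable f := (integrable_indicator_iff measurableSet_closedBall).2
    (hφ.continuousOn.integrableOn_compact (isCompact_closedBall _ _))
  have hline (w : Fin n → ℝ) : ∫ t, f (x₀ + e (t, w)) = 0 := by
    set p := x₀ + e (0, w)
    have hp (t : ℝ) : x₀ + e (t, w) = p + t • v := by
      rw [add_assoc]; exact congrArg _ (toLp_insertNth_eq_add_smul i t w)
    have hnorm (t : ℝ) : ‖x₀ + e (t, w) - x₀‖ ^ 2 = t ^ 2 + ∑ j, w j ^ 2 := by
      rw [add_sub_cancel_left]; exact norm_toLp_insertNth_sq i t w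
    have hmem (t : ℝ) :
        x₀ + e (t, w) ∈ Metric.closedBall x₀ R ↔ t ^ 2 ≤ R ^ 2 - ∑ j, w j ^ 2 := by
      rw [Metric.mem_closedBall, dist_eq_norm, ← sq_le_sq₀ (norm_nonneg _) hR, hnorm]
      constructor <;> intro h <;> linarith
    have hf_line : (fun t => f (x₀ + e (t, w)))
        = {t : ℝ | t ^ 2 ≤ R ^ 2 - ∑ j, w j ^ 2}.indicator (fun t => φ (p + t • v)) := by
      ext t
      simp only [f, indicator, hmem, mem_ofPred_eq]
      rw [hp]
    rw [hf_line]
    refine integral_indicator_sq_le_eq_zero (g := fun t => F (p + t • v)) (fun t => ?_)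
      (hφ.comp (continuous_const.add (continuous_id.smul continuous_const))) (fun t ht => ?_)
    · have hpath : HasDerivAt (fun t : ℝ => p + t • v) v t := by
        simpa using ((hasDerivAt_id t).smul_const v).const_add p
      exact ((hF.differentiable one_ne_zero) _).hasFDerivAt.comp_hasDerivAt t hpath
    · refine hF0 _ ?_
      rw [← hp, ← sq_eq_sq₀ (norm_nonneg _) hR, hnorm]
      linarith
  calc ∫ x in Metric.closedBall x₀ R, φ x = ∫ x, f x :=
        (integral_indicator measurableSet_closedBall).symm
    _ = ∫ y, f (x₀ + y) := (integral_add_left_eq_self f x₀).symm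
    _ = ∫ z, f (x₀ + e z) := (he.integral_comp e.measurableEmbedding _).symm
    _ = ∫ w, ∫ t, f (x₀ + e (t, w)) :=
        integral_prod_symm _
          ((he.integrable_comp_emb e.measurableEmbedding).2 (hf.comp_add_left x₀))
    _ = 0 := by simp [hline]

theorem sum_fderiv_coord_sub_mul_single {g : EuclideanSpace ℝ (Fin N) → ℝ}
    {x : EuclideanSpace ℝ (Fin N)} (hg : DifferentiableAt ℝ g x) :
    ∑ i, fderiv ℝ (fun y => (y - x₀) i * g y) x (EuclideanSpace.single i 1)
      = N * g x + fderiv ℝ g x (x - x₀) := by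
  have hterm (i : Fin N) : fderiv ℝ (fun y => (y - x₀) i * g y) x (EuclideanSpace.single i 1)
      = g x + (x - x₀) i * fderiv ℝ g x (EuclideanSpace.single i 1) := by
    have hcoord : HasFDerivAt (fun y : EuclideanSpace ℝ (Fin N) => (y - x₀) i)
        (EuclideanSpace.proj (𝕜 := ℝ) i) x := by
      simpa using (EuclideanSpace.proj (𝕜 := ℝ) i).hasFDerivAt.sub_const (x₀ i)
    have h : HasFDerivAt (fun y => (y - x₀) i * g y) _ x := hcoord.mul hg.hasFDerivAt
    rw [h.fderiv]
    simp [add_comm]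
  have hsum : ∑ i, (x - x₀) i * fderiv ℝ g x (EuclideanSpace.single i 1)
      = fderiv ℝ g x (x - x₀) := by
    conv_rhs => rw [← (EuclideanSpace.basisFun (Fin N) ℝ).sum_repr (x - x₀)]
    simp [map_sum]
  simp only [hterm, Finset.sum_add_distrib, hsum, Finset.sum_const, Finset.card_univ,
    Fintype.card_fin, nsmul_eq_mul]

theorem fderiv_sq_mul_gaussian_apply_sub {u : EuclideanSpace ℝ (Fin N) → ℝ}
    {x : EuclideanSpace ℝ (Fin N)} (hu : DifferentiableAt ℝ u x) (lam : ℝ) :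
    fderiv ℝ (fun y => u y ^ 2 * exp (-‖y - x₀‖ ^ 2 / (4 * lam))) x (x - x₀)
      = (2 * u x * fderiv ℝ u x (x - x₀) - ‖x - x₀‖ ^ 2 / (2 * lam) * u x ^ 2)
          * exp (-‖x - x₀‖ ^ 2 / (4 * lam)) := by
  have hq : HasFDerivAt (fun y => -(4 * lam)⁻¹ * ‖y - x₀‖ ^ 2)
      ((-(4 * lam)⁻¹) • (2 • innerSL ℝ (x - x₀))) x := by
    simpa using ((hasFDerivAt_id x).sub_const x₀).norm_sq.const_mul (-(4 * lam)⁻¹)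
  have hG := hq.exp
  simp only [neg_mul, ← neg_div, inv_mul_eq_div] at hG
  have h : HasFDerivAt (fun y => u y ^ 2 * exp (-‖y - x₀‖ ^ 2 / (4 * lam))) _ x :=
    (hu.hasFDerivAt.pow 2).mul hG
  rw [h.fderiv]
  simp only [add_apply, smul_apply, innerSL_apply_apply,
    real_inner_self_eq_norm_sq, smul_eq_mul, nsmul_eq_mul]
  field_simp
  ring

theorem setIntegral_closedBall_mul_add_fderiv_sub_eq_zero {R : ℝ} (hR : 0 ≤ R)
    {g : EuclideanSpace ℝ (Fin N) → ℝ} (hg : ContDiff ℝ 1 g)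
    (hg0 : ∀ x, ‖x - x₀‖ = R → g x = 0) :
    ∫ x in Metric.closedBall x₀ R, (N * g x + fderiv ℝ g x (x - x₀)) = 0 := by
  have hF (i : Fin N) : ContDiff ℝ 1 (fun y => (y - x₀) i * g y) :=
    ((EuclideanSpace.proj (𝕜 := ℝ) i).contDiff.comp (contDiff_id.sub contDiff_const)).mul hg
  simp_rw [← sum_fderiv_coord_sub_mul_single (hg.differentiable one_ne_zero _)]
  rw [integral_finsetSum _ fun i _ => (((hF i).continuous_fderiv one_ne_zero).clm_apply
    continuous_const).continuousOn.integrableOn_compact (isCompact_closedBall _ _)]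
  refine Finset.sum_eq_zero fun i _ => integral_fderiv_single_closedBall_eq_zero hR (hF i)
    (fun x hx => by simp [hg0 x hx]) i

theorem eight_mul_mul_apply_le {E : Type*} [NormedAddCommGroup E] [NormedSpace ℝ E]
    (lam a : ℝ) (L : StrongDual ℝ E) (h : E) :
    8 * lam * (a * L h) ≤ ‖h‖ ^ 2 * a ^ 2 + 16 * lam ^ 2 * ‖L‖ ^ 2 := by
  have hL : |a * L h| ≤ |a| * (‖L‖ * ‖h‖) := by
    rw [abs_mul, ← Real.norm_eq_abs (L h)]
    exact mul_le_mul_of_nonneg_left (L.le_opNorm h) (abs_nonneg a)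
  have h1 : lam * (a * L h) ≤ |lam| * (|a| * (‖L‖ * ‖h‖)) :=
    (le_abs_self _).trans (by rw [abs_mul]; exact mul_le_mul_of_nonneg_left hL (abs_nonneg _))
  nlinarith [sq_nonneg (|a| * ‖h‖ - 4 * |lam| * ‖L‖), sq_abs a, sq_abs lam]

theorem setIntegral_sq_norm_sub_mul_gaussian_le {lam R : ℝ} (hlam : lam ≠ 0) (hR : 0 ≤ R)
    {u : EuclideanSpace ℝ (Fin N) → ℝ} (hu : ContDiff ℝ 1 u)
    (hu0 : ∀ x, ‖x - x₀‖ = R → u x = 0) :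
    ∫ x in Metric.closedBall x₀ R, ‖x - x₀‖ ^ 2 * (u x ^ 2 * exp (-‖x - x₀‖ ^ 2 / (4 * lam)))
      ≤ 4 * lam * N * (∫ x in Metric.closedBall x₀ R, u x ^ 2 * exp (-‖x - x₀‖ ^ 2 / (4 * lam)))
        + 16 * lam ^ 2 * ∫ x in Metric.closedBall x₀ R,
            ‖fderiv ℝ u x‖ ^ 2 * exp (-‖x - x₀‖ ^ 2 / (4 * lam)) := by
  set G := fun x : EuclideanSpace ℝ (Fin N) => exp (-‖x - x₀‖ ^ 2 / (4 * lam))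
  set g := fun x => u x ^ 2 * G x
  have hG : ContDiff ℝ 1 G :=
    ((contDiff_norm_sq ℝ).comp (contDiff_id.sub contDiff_const)).neg.div_const _ |>.exp
  have hg : ContDiff ℝ 1 g := (hu.pow 2).mul hG
  have hdiv : ∫ x in Metric.closedBall x₀ R, (N * g x + fderiv ℝ g x (x - x₀)) = 0 :=
    setIntegral_closedBall_mul_add_fderiv_sub_eq_zero hR hg (fun x hx => by simp [g, hu0 x hx])
  have hpoint (x : EuclideanSpace ℝ (Fin N)) : ‖x - x₀‖ ^ 2 * g x
      ≤ 4 * lam * N * g x + 16 * lam ^ 2 * (‖fderiv ℝ u x‖ ^ 2 * G x)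
        - 4 * lam * (N * g x + fderiv ℝ g x (x - x₀)) := by
    rw [fderiv_sq_mul_gaussian_apply_sub (hu.differentiable one_ne_zero x)]
    have := mul_le_mul_of_nonneg_right
      (eight_mul_mul_apply_le lam (u x) (fderiv ℝ u x) (x - x₀))
      (exp_pos (-‖x - x₀‖ ^ 2 / (4 * lam))).le
    have hk : 4 * lam * (‖x - x₀‖ ^ 2 / (2 * lam)) = 2 * ‖x - x₀‖ ^ 2 := by field_simp; ring
    simp only [g, G]
    linear_combination this - (u x ^ 2 * exp (-‖x - x₀‖ ^ 2 / (4 * lam))) * hk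
  have hint {f : EuclideanSpace ℝ (Fin N) → ℝ} (hf : Continuous f) :
      IntegrableOn f (Metric.closedBall x₀ R) :=
    hf.continuousOn.integrableOn_compact (isCompact_closedBall _ _)
  have hgc := hg.continuous
  have hDu : Continuous fun x => ‖fderiv ℝ u x‖ ^ 2 * G x :=
    ((hu.continuous_fderiv one_ne_zero).norm.pow 2).mul hG.continuous
  have hdivc : Continuous fun x => N * g x + fderiv ℝ g x (x - x₀) :=
    (continuous_const.mul hgc).add ((hg.continuous_fderiv one_ne_zero).clm_apply
      (continuous_id.sub continuous_const))
  calc _ ≤ ∫ x in Metric.closedBall x₀ R, (4 * lam * N * g x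
          + 16 * lam ^ 2 * (‖fderiv ℝ u x‖ ^ 2 * G x)
          - 4 * lam * (N * g x + fderiv ℝ g x (x - x₀))) :=
      setIntegral_mono_on
        (hint (((continuous_norm.comp (continuous_id.sub continuous_const)).pow 2).mul hgc))
        (hint (by fun_prop)) measurableSet_closedBall fun x _ => hpoint x
    _ = _ := by
      rw [integral_sub (hint (by fun_prop)) ((hint hdivc).const_mul _), integral_const_mul, hdiv,
        integral_add ((hint hgc).const_mul _) ((hint hDu).const_mul _), integral_const_mul,
        integral_const_mul]
      ring

end Ball

theorem setIntegral_closedBall_le_add_inv_sq_mul {E : Type*} [NormedAddCommGroup E]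
    [MeasurableSpace E] [OpensMeasurableSpace E] {μ : Measure E} {x₀ : E} {r R : ℝ} {g : E → ℝ}
    (hr : 0 < r) (hrR : r ≤ R) (hg : 0 ≤ g) (hgi : IntegrableOn g (Metric.closedBall x₀ R) μ)
    (hgi' : IntegrableOn (fun x => ‖x - x₀‖ ^ 2 * g x) (Metric.closedBall x₀ R) μ) :
    ∫ x in Metric.closedBall x₀ R, g x ∂μ ≤ ∫ x in Metric.closedBall x₀ r, g x ∂μ
      + (r ^ 2)⁻¹ * ∫ x in Metric.closedBall x₀ R, ‖x - x₀‖ ^ 2 * g x ∂μ := by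
  set A := Metric.closedBall x₀ R \ Metric.closedBall x₀ r
  have hsub : Metric.closedBall x₀ r ⊆ Metric.closedBall x₀ R :=
    Metric.closedBall_subset_closedBall hrR
  have hA : MeasurableSet A := measurableSet_closedBall.diff measurableSet_closedBall
  have hsplit : ∫ x in Metric.closedBall x₀ R, g x ∂μ
      = ∫ x in Metric.closedBall x₀ r, g x ∂μ + ∫ x in A, g x ∂μ := by
    rw [← setIntegral_union disjoint_sdiff_right hA (hgi.mono_set hsub)
      (hgi.mono_set sdiff_subset), union_sdiff_cancel hsub]
  have hann : ∫ x in A, g x ∂μ ≤ ∫ x in A, (r ^ 2)⁻¹ * (‖x - x₀‖ ^ 2 * g x) ∂μ := by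
    refine setIntegral_mono_on (hgi.mono_set sdiff_subset)
      ((hgi'.mono_set sdiff_subset).const_mul _) hA fun x hx => ?_
    have hxr : r < ‖x - x₀‖ := by simpa [dist_eq_norm] using hx.2
    rw [← mul_assoc]
    exact le_mul_of_one_le_left (hg x)
      ((one_le_inv_mul₀ (by positivity)).2 (pow_le_pow_left₀ hr.le hxr.le 2))
  have hball : ∫ x in A, ‖x - x₀‖ ^ 2 * g x ∂μ
      ≤ ∫ x in Metric.closedBall x₀ R, ‖x - x₀‖ ^ 2 * g x ∂μ :=
    setIntegral_mono_set hgi' (ae_of_all _ fun x => mul_nonneg (sq_nonneg _) (hg x))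
      sdiff_subset.eventuallyLE
  rw [integral_const_mul] at hann
  have := mul_le_mul_of_nonneg_left hball (inv_nonneg.2 (sq_nonneg r))
  linarith

theorem stmt9_general (N : ℕ) (R0 lam r mu : ℝ)
    (hlam : 0 < lam) (hr : 0 < r) (hrR : r < R0)
    (x₀ : EuclideanSpace ℝ (Fin N))
    (u : EuclideanSpace ℝ (Fin N) → ℝ) (hreg : ContDiff ℝ 2 u)
    (hbd : ∀ x, ‖x - x₀‖ = R0 → u x = 0)
    (hNf : (16*lam/r^2) * ((N:ℝ)/4
        + lam * ((∫ x in Metric.closedBall x₀ R0,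
              ‖fderiv ℝ u x‖^2 * Real.exp (-‖x - x₀‖^2/(4*lam)))
            / (∫ x in Metric.closedBall x₀ R0,
              (u x)^2 * Real.exp (-‖x - x₀‖^2/(4*lam))))) ≤ mu) :
    (1 - mu) * (∫ x in Metric.closedBall x₀ R0,
        (u x)^2 * Real.exp (-‖x - x₀‖^2/(4*lam)))
    ≤ ∫ x in Metric.closedBall x₀ r,
        (u x)^2 * Real.exp (-‖x - x₀‖^2/(4*lam)) := by
  have hg : Continuous fun x => (u x)^2 * Real.exp (-‖x - x₀‖^2/(4*lam)) := by
    have := hreg.continuous; fun_prop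
  have hint {f : EuclideanSpace ℝ (Fin N) → ℝ} (hf : Continuous f) :
      IntegrableOn f (Metric.closedBall x₀ R0) :=
    hf.continuousOn.integrableOn_compact (isCompact_closedBall _ _)
  have hsplit := setIntegral_closedBall_le_add_inv_sq_mul hr hrR.le (fun x => by positivity)
    (hint hg) (hint (((continuous_norm.comp (continuous_id.sub continuous_const)).pow 2).mul hg))
  have hHardy := mul_le_mul_of_nonneg_left (setIntegral_sq_norm_sub_mul_gaussian_le hlam.ne'
    (hr.trans hrR).le (hreg.of_le one_le_two) hbd) (inv_nonneg.2 (sq_nonneg r))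
  set I := ∫ x in Metric.closedBall x₀ R0, (u x)^2 * Real.exp (-‖x - x₀‖^2/(4*lam))
  set Ir := ∫ x in Metric.closedBall x₀ r, (u x)^2 * Real.exp (-‖x - x₀‖^2/(4*lam))
  set D := ∫ x in Metric.closedBall x₀ R0, ‖fderiv ℝ u x‖^2 * Real.exp (-‖x - x₀‖^2/(4*lam))
  have hIr : 0 ≤ Ir := setIntegral_nonneg measurableSet_closedBall fun x _ => by positivity
  have hI0 : 0 ≤ I := setIntegral_nonneg measurableSet_closedBall fun x _ => by positivity
  rcases hI0.eq_or_lt with hI | hI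
  · rw [← hI, mul_zero]
    exact hIr
  have hfreq : (r ^ 2)⁻¹ * (4 * lam * N * I + 16 * lam ^ 2 * D) ≤ mu * I :=
    calc _ = (16*lam/r^2) * ((N:ℝ)/4 + lam * (D / I)) * I := by field_simp; ring
      _ ≤ mu * I := mul_le_mul_of_nonneg_right hNf hI.le
  linarith

/-- small frequency at the final time forces concentration in the
small ball (conclusion of Step 3 of Lemma 3.2). -/
theorem stmt9 (N : ℕ) (hN : 1 ≤ N) (R0 lam r mu : ℝ) (hR0 : 0 < R0)
    (hlam : 0 < lam) (hr : 0 < r) (hrR : r < R0) (hmu : mu ∈ Set.Ioo (0:ℝ) 1)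
    (x₀ : EuclideanSpace ℝ (Fin N))
    (u : EuclideanSpace ℝ (Fin N) → ℝ) (hreg : ContDiff ℝ 2 u)
    (hbd : ∀ x, ‖x - x₀‖ = R0 → u x = 0)
    (hNf : (16*lam/r^2) * ((N:ℝ)/4
        + lam * ((∫ x in Metric.closedBall x₀ R0,
              ‖fderiv ℝ u x‖^2 * Real.exp (-‖x - x₀‖^2/(4*lam)))
            / (∫ x in Metric.closedBall x₀ R0,
              (u x)^2 * Real.exp (-‖x - x₀‖^2/(4*lam))))) ≤ mu) :
    (1 - mu) * (∫ x in Metric.closedBall x₀ R0,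
        (u x)^2 * Real.exp (-‖x - x₀‖^2/(4*lam)))
    ≤ ∫ x in Metric.closedBall x₀ r,
        (u x)^2 * Real.exp (-‖x - x₀‖^2/(4*lam)) :=
  stmt9_general N R0 lam r mu hlam hr hrR x₀ u hreg hbd hNf
end

section
/- Let $E\subset(0,T)$ be measurable with positive measure and let $l$ be a density point of $E$. Then for each $\kappa>1$ there exists $l_1\in(l,T)$ such that the sequence $l_{m+1}=l+\kappa^{-m}(l_1-l)$ satisfies $l_m-l_{m+1}\le 3\,|E\cap(l_{m+1},l_m)|$ for all $m\ge 1$, where $|\cdot|$ denotes Lebesgue measure. -/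
open MeasureTheory Real Set

/-- geometric sequence towards a density point of E
(Proposition 2.1 of Phung–Wang). -/
theorem stmt16 (T : ℝ) (hT : 0 < T) (E : Set ℝ) (hE : MeasurableSet E)
    (hEsub : E ⊆ Set.Ioo 0 T) (hEpos : 0 < volume E)
    (l : ℝ) (hl : l ∈ Set.Ioo 0 T)
    (hdens : Filter.Tendsto
      (fun h => volume (E ∩ Set.Ioo l (l+h)) / ENNReal.ofReal h)
      (nhdsWithin 0 (Set.Ioi 0)) (nhds 1)) :
    ∀ κ : ℝ, 1 < κ →
      ∃ l1, l < l1 ∧ l1 < T ∧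
        ∀ m : ℕ, 1 ≤ m →
          (l + (l1 - l)/κ^(m-1)) - (l + (l1 - l)/κ^m)
            ≤ 3 * (volume (E ∩ Set.Ioo (l + (l1 - l)/κ^m)
                (l + (l1 - l)/κ^(m-1)))).toReal := by

  intro κ hκ
  have hκ0 : (0:ℝ) < κ := by linarith
  have hκinv : 1/κ < 1 := by rw [div_lt_one hκ0]; exact hκ
  have hκinv0 : 0 < 1/κ := by positivity
  set ε : ℝ := (1 - 1/κ)/3 with hεdef
  have hεpos : 0 < ε := by rw [hεdef]; linarith
  have hε1 : 1 - ε < 1 := by linarith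
  have hc : ENNReal.ofReal (1-ε) < 1 := by
    rw [← ENNReal.ofReal_one]
    exact ENNReal.ofReal_lt_ofReal_iff one_pos |>.mpr hε1
  have hev := hdens.eventually (Ioi_mem_nhds hc)
  obtain ⟨δ, hδ, hδP'⟩ := Metric.mem_nhdsWithin_iff.mp hev
  have hδP : ∀ x : ℝ, dist x 0 < δ → x ∈ Set.Ioi (0:ℝ) →
      ENNReal.ofReal (1 - ε) < volume (E ∩ Set.Ioo l (l + x)) / ENNReal.ofReal x :=
    fun x h1 h2 => hδP' ⟨h1, h2⟩
  obtain ⟨hl0, hlT⟩ := hl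
  set d := min (δ/2) ((T - l)/2) with hddef
  have hd0 : 0 < d := lt_min (by linarith) (by linarith)
  have hdδ : d < δ := lt_of_le_of_lt (min_le_left _ _) (by linarith)
  have hdT : d < T - l := lt_of_le_of_lt (min_le_right _ _) (by linarith)
  refine ⟨l + d, by linarith, by linarith, ?_⟩
  intro m hm
  have hadd : (l + d) - l = d := by ring
  rw [hadd]
  have hpow : κ^m = κ^(m-1) * κ := by
    conv_lhs => rw [← Nat.succ_pred_eq_of_pos hm]
    rw [pow_succ, Nat.pred_eq_sub_one]
  set s : ℝ := d / κ^(m-1) with hsdef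
  have hκp : (0:ℝ) < κ^(m-1) := pow_pos hκ0 _
  have hs0 : 0 < s := div_pos hd0 hκp
  have hsd : s ≤ d := by
    rw [hsdef]
    exact div_le_self hd0.le (one_le_pow₀ hκ.le)
  have hsδ : s < δ := lt_of_le_of_lt hsd hdδ
  have hdm : d / κ^m = s / κ := by rw [hpow, hsdef, div_div]
  rw [hdm]
  -- key ratio estimate at h = s
  have hrat := hδP s (by rw [Real.dist_eq, sub_zero, abs_of_pos hs0]; exact hsδ) hs0
  have hsne : ENNReal.ofReal s ≠ 0 := by
    simp [ENNReal.ofReal_eq_zero, not_le, hs0]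
  have hmul : ENNReal.ofReal ((1-ε) * s) ≤ volume (E ∩ Set.Ioo l (l+s)) := by
    rw [ENNReal.ofReal_mul (by linarith)]
    have := (ENNReal.lt_div_iff_mul_lt (Or.inl hsne)
      (Or.inl ENNReal.ofReal_ne_top)).mp hrat
    exact this.le
  -- split interval
  set A := E ∩ Set.Ioo (l + s/κ) (l + s) with hAdef
  have hsplit : volume (E ∩ Set.Ioo l (l+s))
      ≤ volume A + ENNReal.ofReal (s/κ) := by
    have hsub : E ∩ Set.Ioo l (l+s) ⊆ A ∪ Set.Ioc l (l + s/κ) := by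
      rintro x ⟨hxE, hx1, hx2⟩
      by_cases hx : l + s/κ < x
      · exact Or.inl ⟨hxE, hx, hx2⟩
      · exact Or.inr ⟨hx1, not_lt.mp hx⟩
    calc volume (E ∩ Set.Ioo l (l+s)) ≤ volume (A ∪ Set.Ioc l (l + s/κ)) :=
          measure_mono hsub
      _ ≤ volume A + volume (Set.Ioc l (l + s/κ)) := measure_union_le _ _
      _ = volume A + ENNReal.ofReal (s/κ) := by
          rw [Real.volume_Ioc]; ring_nf
  have hAfin : volume A ≠ ⊤ := by
    have : volume A ≤ volume (Set.Ioo (l + s/κ) (l + s)) :=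
      measure_mono inter_subset_right
    exact ne_top_of_le_ne_top (by rw [Real.volume_Ioo]; exact ENNReal.ofReal_ne_top) this
  have hkey : (1-ε) * s ≤ (volume A).toReal + s/κ := by
    have h1 : ENNReal.ofReal ((1-ε) * s)
        ≤ volume A + ENNReal.ofReal (s/κ) := hmul.trans hsplit
    have h2 := ENNReal.toReal_mono (by
      exact ENNReal.add_ne_top.mpr ⟨hAfin, ENNReal.ofReal_ne_top⟩) h1
    rw [ENNReal.toReal_ofReal (mul_nonneg (by linarith) hs0.le), ENNReal.toReal_add hAfin
      ENNReal.ofReal_ne_top, ENNReal.toReal_ofReal (by positivity)] at h2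
    exact h2
  rw [hεdef] at hkey
  have hVnn : 0 ≤ (volume A).toReal := ENNReal.toReal_nonneg
  have hsc : s / κ < s := div_lt_self hs0 hκ
  have hinv : (1 - 1/κ)/3 * s = (s - s/κ)/3 := by ring
  linarith [hkey, hsc, hVnn, hinv]
end
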